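/- arXiv:2010.14503 — 8 statements merged into one kernel-verified Lean document; each statement's English description precedes it below -/
import Mathlib

section
/- Membership criterion: a user k belongs to some secure independent set if and only if the singleton {k} is itself a secure independent set. -/
open Finset

variable {K : ℕ}

/-- The set of transmitters heard at receiver `k`: `T k = insert k (I k)`. -/
def Tset (I : Fin K → Finset (Fin K)) (k : Fin K) : Finset (Fin K) :=
  insert k (I k)

/-- The set of receivers that hear transmitter `j`: `R j = {m : j ∈ T m}`. -/
def Rset (I : Fin K → Finset (Fin K)) (j : Fin K) : Finset (Fin K) :=
  Finset.univ.filter (fun m => j ∈ Tset I m)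

/-- For a finite set `C` of users, `R_C = ⋃ j ∈ C, R j`. -/
def RsetOf (I : Fin K → Finset (Fin K)) (C : Finset (Fin K)) : Finset (Fin K) :=
  C.biUnion (Rset I)

/-- `U` is an independent set: for all distinct `i, j ∈ U`, `j ∉ T i`. -/
def IndepSet (I : Fin K → Finset (Fin K)) (U : Finset (Fin K)) : Prop :=
  ∀ i ∈ U, ∀ j ∈ U, i ≠ j → j ∉ Tset I i

/-- `U` is a secure independent set: `U` is independent and there is a jammer
witness `C` with `C ∩ U = ∅`, `U ∩ R_C = ∅`, and `R_U \ U ⊆ R_C`. -/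
def SecureIndepSet (I : Fin K → Finset (Fin K)) (U : Finset (Fin K)) : Prop :=
  IndepSet I U ∧ ∃ C : Finset (Fin K),
    C ∩ U = ∅ ∧ U ∩ RsetOf I C = ∅ ∧ RsetOf I U \ U ⊆ RsetOf I C


/-- Membership criterion: a user belongs to some secure independent set iff its
singleton is a secure independent set. -/
theorem mem_secureIndepSet_iff_singleton (K : ℕ) (hK : 1 ≤ K)
    (I : Fin K → Finset (Fin K)) (hI : ∀ k, k ∉ I k) (k : Fin K) :
    (∃ U : Finset (Fin K), SecureIndepSet I U ∧ k ∈ U) ↔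
      SecureIndepSet I ({k} : Finset (Fin K)) := by
  constructor
  · rintro ⟨U, ⟨hind, C, hCU, hURC, hRU⟩, hkU⟩
    have hCU' : ∀ x, x ∈ C → x ∉ U := fun x hx hxU =>
      (Finset.eq_empty_iff_forall_notMem.mp hCU x) (mem_inter.mpr ⟨hx, hxU⟩)
    have hURC' : ∀ x, x ∈ U → x ∉ RsetOf I C := fun x hx hxR =>
      (Finset.eq_empty_iff_forall_notMem.mp hURC x) (mem_inter.mpr ⟨hx, hxR⟩)
    refine ⟨?_, C ∪ (U \ {k}), ?_, ?_, ?_⟩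
    · intro i hi j hj hij
      simp only [mem_singleton] at hi hj
      exact absurd (hi.trans hj.symm) hij
    · rw [Finset.eq_empty_iff_forall_notMem]
      intro x hx
      rw [mem_inter, mem_union, mem_sdiff, mem_singleton] at hx
      obtain ⟨h1, rfl⟩ := hx
      rcases h1 with h | ⟨_, h⟩
      · exact hCU' x h hkU
      · exact h rfl
    · rw [Finset.eq_empty_iff_forall_notMem]
      intro x hx
      rw [mem_inter, mem_singleton] at hx
      obtain ⟨rfl, hx⟩ := hx
      rw [RsetOf, mem_biUnion] at hx
      obtain ⟨j, hj, hxj⟩ := hx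
      rcases mem_union.mp hj with hjC | hjU
      · exact hURC' x hkU (mem_biUnion.mpr ⟨j, hjC, hxj⟩)
      · obtain ⟨hjU', hjk⟩ := mem_sdiff.mp hjU
        rw [mem_singleton] at hjk
        rw [Rset, mem_filter] at hxj
        exact hind x hkU j hjU' (fun h => hjk h.symm) hxj.2
    · intro m hm
      rw [mem_sdiff, mem_singleton] at hm
      obtain ⟨hm1, hm2⟩ := hm
      rw [RsetOf, mem_biUnion] at hm1
      obtain ⟨j, hj, hmj⟩ := hm1
      rw [mem_singleton] at hj
      subst hj
      by_cases hmU : m ∈ U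
      · rw [Rset, mem_filter] at hmj
        exact absurd hmj.2 (hind m hmU j hkU (fun h => hm2 (h ▸ rfl)))
      · have hmem : m ∈ RsetOf I U \ U :=
          mem_sdiff.mpr ⟨mem_biUnion.mpr ⟨j, hkU, hmj⟩, hmU⟩
        have hmC := hRU hmem
        rw [RsetOf, mem_biUnion] at hmC
        obtain ⟨c, hc, hmc⟩ := hmC
        exact mem_biUnion.mpr ⟨c, mem_union_left _ hc, hmc⟩
  · intro h
    exact ⟨{k}, h, mem_singleton_self k⟩
end

section
/- Characterization of securable singletons: for any user k, the singleton {k} is a secure independent set if and only if there is no user m ≠ k with k ∈ I m and T m ⊆ T k. -/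
open Finset

variable {K : ℕ}

/-- Characterization of securable singletons. -/
theorem singleton_secureIndepSet_iff (K : ℕ) (hK : 1 ≤ K)
    (I : Fin K → Finset (Fin K)) (hI : ∀ k, k ∉ I k) (k : Fin K) :
    SecureIndepSet I ({k} : Finset (Fin K)) ↔
      ¬ ∃ m : Fin K, m ≠ k ∧ k ∈ I m ∧ Tset I m ⊆ Tset I k := by
  constructor
  · rintro ⟨-, C, hCU, hUR, hcov⟩ ⟨m, hmk, hkIm, hTsub⟩
    have hm : m ∈ RsetOf I ({k} : Finset (Fin K)) \ {k} := by
      simp [RsetOf, Rset, Tset, hmk, hkIm]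
    obtain ⟨j, hjC, hjm⟩ := by
      have := hcov hm
      simpa [RsetOf] using this
    have hjTm : j ∈ Tset I m := by simpa [Rset] using hjm
    have hjTk : j ∈ Tset I k := hTsub hjTm
    have hk : k ∈ ({k} : Finset (Fin K)) ∩ RsetOf I C := by
      simp only [mem_inter, mem_singleton, true_and]
      exact mem_biUnion.2 ⟨j, hjC, by simp [Rset, hjTk]⟩
    rw [hUR] at hk
    exact absurd hk (notMem_empty k)
  · intro h
    refine ⟨?_, univ \ Tset I k, ?_, ?_, ?_⟩
    · intro i hi j hj hij
      simp only [mem_singleton] at hi hj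
      exact absurd (hi.trans hj.symm) hij
    · ext x
      simp only [mem_inter, mem_sdiff, mem_univ, true_and, mem_singleton,
        notMem_empty, iff_false]
      rintro ⟨hx, rfl⟩
      exact hx (by simp [Tset])
    · ext x
      simp only [mem_inter, mem_singleton, notMem_empty, iff_false]
      rintro ⟨rfl, hx⟩
      obtain ⟨j, hj, hjx⟩ := mem_biUnion.1 hx
      simp only [mem_sdiff, mem_univ, true_and] at hj
      exact hj (by simpa [Rset] using hjx)
    · intro m hm
      simp only [mem_sdiff, mem_singleton] at hm
      obtain ⟨hmR, hmk⟩ := hm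
      have hkTm : k ∈ Tset I m := by
        have := mem_biUnion.1 hmR
        obtain ⟨j, hj, hjm⟩ := this
        simp only [mem_singleton] at hj
        subst hj
        simpa [Rset] using hjm
      have hkIm : k ∈ I m := by
        rcases mem_insert.1 hkTm with h' | h'
        · exact absurd h'.symm hmk
        · exact h'
      have hnsub : ¬ Tset I m ⊆ Tset I k := by
        intro hsub
        exact h ⟨m, hmk, hkIm, hsub⟩
      obtain ⟨j, hjm, hjk⟩ := not_subset.1 hnsub
      exact mem_biUnion.2 ⟨j, by simp [hjk], by simp [Rset, hjm]⟩
end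

section
/- Directed infeasibility lemma (combinatorial core of the converse of Theorem 1): if two distinct users i and j satisfy i ∈ I j, j ∈ I i, and I j \ {i} ⊆ I i \ {j}, then the singleton {i} is not a secure independent set. -/
open Finset

variable {K : ℕ}

/-- Directed infeasibility lemma (combinatorial core of the converse of
Theorem 1). -/
theorem directed_infeasibility (K : ℕ) (hK : 1 ≤ K)
    (I : Fin K → Finset (Fin K)) (hI : ∀ k, k ∉ I k)
    (i j : Fin K) (hij : i ≠ j)
    (h1 : i ∈ I j) (h2 : j ∈ I i) (h3 : I j \ {i} ⊆ I i \ {j}) :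
    ¬ SecureIndepSet I ({i} : Finset (Fin K)) := by
  rintro ⟨-, C, hCU, hURC, hsub⟩
  -- j ∈ R_{{i}} \ {i}
  have hjR : j ∈ RsetOf I ({i} : Finset (Fin K)) \ {i} := by
    simp [RsetOf, Rset, Tset, Finset.mem_sdiff, hij.symm, h1]
  have hjC := hsub hjR
  -- extract witness c ∈ C with c ∈ T j
  rw [RsetOf, Finset.mem_biUnion] at hjC
  obtain ⟨c, hcC, hc⟩ := hjC
  rw [Rset, Finset.mem_filter, Tset, Finset.mem_insert] at hc
  -- i ∉ R_C
  have hiRC : i ∉ RsetOf I C := by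
    intro h
    have : i ∈ ({i} : Finset (Fin K)) ∩ RsetOf I C := by simp [h]
    rw [hURC] at this
    exact absurd this (Finset.notMem_empty i)
  apply hiRC
  rw [RsetOf, Finset.mem_biUnion]
  refine ⟨c, hcC, ?_⟩
  rw [Rset, Finset.mem_filter, Tset]
  rcases hc.2 with hcj | hcI
  · subst hcj
    simp [h2]
  · have hci : c ≠ i := by
      rintro rfl
      have : c ∈ C ∩ ({c} : Finset (Fin K)) := by simp [hcC]
      rw [hCU] at this
      exact absurd this (Finset.notMem_empty c)
    have : c ∈ I i \ {j} := h3 (by simp [hcI, hci])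
    simp [Finset.mem_sdiff.mp this |>.1]
end

section
/- Combinatorial core of Theorem 1: the blocking-pair condition holds if and only if there exists a user k such that the singleton {k} is not a secure independent set. Equivalently, every singleton {k} (k a user) is a secure independent set if and only if the blocking-pair condition fails. -/
open Finset

variable {K : ℕ}

/-- The blocking-pair condition: there exist distinct users i, j with i ∈ I j,
j ∈ I i, and (I j \ {i} ⊆ I i \ {j} or I i \ {j} ⊆ I j \ {i}). -/
def BlockingPair (I : Fin K → Finset (Fin K)) : Prop :=
  ∃ i j : Fin K, i ≠ j ∧ i ∈ I j ∧ j ∈ I i ∧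
    (I j \ {i} ⊆ I i \ {j} ∨ I i \ {j} ⊆ I j \ {i})


/-- Combinatorial core of Theorem 1: the blocking-pair condition holds iff some
singleton is not a secure independent set; equivalently, every singleton is a
secure independent set iff the blocking-pair condition fails. -/
theorem blockingPair_iff_bad_singleton (K : ℕ) (hK : 1 ≤ K)
    (I : Fin K → Finset (Fin K)) (hI : ∀ k, k ∉ I k) :
    (BlockingPair I ↔ ∃ k : Fin K, ¬ SecureIndepSet I ({k} : Finset (Fin K))) ∧
    ((∀ k : Fin K, SecureIndepSet I ({k} : Finset (Fin K))) ↔ ¬ BlockingPair I) := by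
  have mem_Rset : ∀ (j m : Fin K), m ∈ Rset I j ↔ j ∈ Tset I m := by
    intro j m; simp [Rset]
  have mem_RsetOf : ∀ (C : Finset (Fin K)) (m : Fin K),
      m ∈ RsetOf I C ↔ ∃ j ∈ C, j ∈ Tset I m := by
    intro C m; simp [RsetOf, mem_Rset]
  -- characterization of secure singletons
  have hsec : ∀ k : Fin K, SecureIndepSet I ({k} : Finset (Fin K)) ↔
      ∀ m, m ≠ k → k ∈ I m → ¬ Tset I m ⊆ Tset I k := by
    intro k
    constructor
    · rintro ⟨-, C, _hC1, hC2, hC3⟩ m hmk hkm hsub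
      have hm : m ∈ RsetOf I ({k} : Finset (Fin K)) \ {k} := by
        simp only [Finset.mem_sdiff, Finset.mem_singleton]
        refine ⟨(mem_RsetOf _ _).2 ⟨k, by simp, ?_⟩, hmk⟩
        exact Finset.mem_insert_of_mem hkm
      obtain ⟨j, hjC, hjm⟩ := (mem_RsetOf _ _).1 (hC3 hm)
      have hk : k ∈ RsetOf I C := (mem_RsetOf _ _).2 ⟨j, hjC, hsub hjm⟩
      have : k ∈ ({k} : Finset (Fin K)) ∩ RsetOf I C := by
        simp [hk]
      rw [hC2] at this
      exact absurd this (Finset.notMem_empty k)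
    · intro h
      refine ⟨?_, Finset.univ \ Tset I k, ?_, ?_, ?_⟩
      · intro i hi j hj hij
        simp only [Finset.mem_singleton] at hi hj
        exact absurd (hi.trans hj.symm) hij
      · apply Finset.eq_empty_of_forall_notMem
        intro x hx
        simp only [Finset.mem_inter, Finset.mem_sdiff, Finset.mem_singleton] at hx
        exact hx.1.2 (hx.2 ▸ Finset.mem_insert_self k (I k))
      · apply Finset.eq_empty_of_forall_notMem
        intro x hx
        simp only [Finset.mem_inter, Finset.mem_singleton] at hx
        obtain ⟨j, hjC, hjT⟩ := (mem_RsetOf _ _).1 hx.2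
        simp only [Finset.mem_sdiff, Finset.mem_univ, true_and] at hjC
        exact hjC (hx.1 ▸ hjT)
      · intro m hm
        simp only [Finset.mem_sdiff, Finset.mem_singleton] at hm
        obtain ⟨hmR, hmk⟩ := hm
        obtain ⟨j, hjk, hjm⟩ := (mem_RsetOf _ _).1 hmR
        simp only [Finset.mem_singleton] at hjk
        subst hjk
        have hkIm : j ∈ I m := by
          rcases Finset.mem_insert.1 hjm with h' | h'
          · exact absurd h'.symm hmk
          · exact h'
        have := h m hmk hkIm
        rw [Finset.not_subset] at this
        obtain ⟨x, hxm, hxk⟩ := this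
        exact (mem_RsetOf _ _).2 ⟨x, by simp [Finset.mem_sdiff, hxk], hxm⟩
  -- characterization of blocking pair via Tset inclusion
  have hbp : BlockingPair I ↔ ∃ k m : Fin K, m ≠ k ∧ k ∈ I m ∧ Tset I m ⊆ Tset I k := by
    constructor
    · rintro ⟨i, j, hij, hiIj, hjIi, hsub | hsub⟩
      · refine ⟨i, j, Ne.symm hij, hiIj, ?_⟩
        intro x hx
        rcases Finset.mem_insert.1 hx with rfl | hx
        · exact Finset.mem_insert_of_mem hjIi
        · by_cases hxi : x = i
          · exact hxi ▸ Finset.mem_insert_self i (I i)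
          · have := hsub (Finset.mem_sdiff.2 ⟨hx, by simp [hxi]⟩)
            exact Finset.mem_insert_of_mem (Finset.mem_sdiff.1 this).1
      · refine ⟨j, i, hij, hjIi, ?_⟩
        intro x hx
        rcases Finset.mem_insert.1 hx with rfl | hx
        · exact Finset.mem_insert_of_mem hiIj
        · by_cases hxj : x = j
          · exact hxj ▸ Finset.mem_insert_self j (I j)
          · have := hsub (Finset.mem_sdiff.2 ⟨hx, by simp [hxj]⟩)
            exact Finset.mem_insert_of_mem (Finset.mem_sdiff.1 this).1
    · rintro ⟨k, m, hmk, hkIm, hsub⟩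
      have hmIk : m ∈ I k := by
        have := hsub (Finset.mem_insert_self m (I m))
        rcases Finset.mem_insert.1 this with h' | h'
        · exact absurd h' hmk
        · exact h'
      refine ⟨m, k, hmk, hmIk, hkIm, Or.inr ?_⟩
      intro x hx
      simp only [Finset.mem_sdiff, Finset.mem_singleton] at hx ⊢
      have hxk : x ∈ Tset I k := hsub (Finset.mem_insert_of_mem hx.1)
      refine ⟨?_, fun h => hI m (h ▸ hx.1)⟩
      rcases Finset.mem_insert.1 hxk with h' | h'
      · exact absurd h' hx.2
      · exact h'
  constructor
  · rw [hbp]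
    constructor
    · rintro ⟨k, m, hmk, hkIm, hsub⟩
      exact ⟨k, fun hs => (hsec k).1 hs m hmk hkIm hsub⟩
    · rintro ⟨k, hk⟩
      rw [hsec, not_forall] at hk
      obtain ⟨m, hm⟩ := hk
      push_neg at hm
      exact ⟨k, m, hm.1, hm.2.1, hm.2.2⟩
  · constructor
    · intro h hb
      rw [hbp] at hb
      obtain ⟨k, m, hmk, hkIm, hsub⟩ := hb
      exact (hsec k).1 (h k) m hmk hkIm hsub
    · intro hnb k
      rw [hsec]
      intro m hmk hkIm hsub
      exact hnb (hbp.2 ⟨k, m, hmk, hkIm, hsub⟩)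
end

section
/- Secure-TDMA feasibility (achievability side of Theorem 1): if the blocking-pair condition fails, then the partition of the user set Fin K into the K singletons {0}, {1}, …, {K−1} is a secure partition; in particular a secure partition with exactly K parts exists. -/
open Finset

variable {K : ℕ}

/-- A secure partition: a finite family of pairwise disjoint secure independent
sets whose union is the whole user set `Fin K`. -/
def SecurePartition (I : Fin K → Finset (Fin K)) {T : ℕ}
    (P : Fin T → Finset (Fin K)) : Prop :=
  (∀ t, SecureIndepSet I (P t)) ∧
  (∀ s t : Fin T, s ≠ t → Disjoint (P s) (P t)) ∧
  Finset.univ.biUnion P = (Finset.univ : Finset (Fin K))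


/-- Secure-TDMA feasibility: if the blocking-pair condition fails, the partition
of `Fin K` into the `K` singletons is a secure partition; in particular a
secure partition with exactly `K` parts exists. -/
theorem secure_tdma_feasibility (K : ℕ) (hK : 1 ≤ K)
    (I : Fin K → Finset (Fin K)) (hI : ∀ k, k ∉ I k)
    (h : ¬ BlockingPair I) :
    SecurePartition I (fun k : Fin K => ({k} : Finset (Fin K))) ∧
    ∃ P : Fin K → Finset (Fin K), SecurePartition I P := by
  have main : SecurePartition I (fun k : Fin K => ({k} : Finset (Fin K))) := by
    refine ⟨?_, ?_, ?_⟩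
    · intro k
      constructor
      · intro i hi j hj hij
        simp only [Finset.mem_singleton] at hi hj
        exact absurd (hi.trans hj.symm) hij
      · refine ⟨Finset.univ.filter (fun j => j ∉ Tset I k), ?_, ?_, ?_⟩
        · ext x
          simp only [Finset.mem_inter, Finset.mem_filter, Finset.mem_singleton,
            Finset.notMem_empty, iff_false]
          rintro ⟨⟨-, hx⟩, rfl⟩
          exact hx (Finset.mem_insert_self _ _)
        · ext x
          simp only [Finset.mem_inter, Finset.mem_singleton, RsetOf, Rset,
            Finset.mem_biUnion, Finset.mem_filter, Finset.notMem_empty, iff_false]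
          rintro ⟨rfl, j, ⟨-, hj⟩, -, hjk⟩
          exact hj hjk
        · intro m hm
          simp only [RsetOf, Finset.singleton_biUnion, Finset.mem_sdiff, Rset,
            Finset.mem_singleton, Finset.mem_filter, Finset.mem_univ, true_and] at hm
          obtain ⟨hkm, hmk⟩ := hm
          have hkIm : k ∈ I m := by
            rcases Finset.mem_insert.mp hkm with h' | h'
            · exact absurd h'.symm hmk
            · exact h'
          -- find a jammer j ∈ T m with j ∉ T k
          have : ∃ j, j ∈ Tset I m ∧ j ∉ Tset I k := by
            by_cases hmIk : m ∈ I k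
            · have hne : k ≠ m := fun e => hmk e.symm
              have hnb : ¬ (I m \ {k} ⊆ I k \ {m}) := by
                intro hsub
                exact h ⟨k, m, hne, hkIm, hmIk, Or.inl hsub⟩
              obtain ⟨j, hj1, hj2⟩ := Finset.not_subset.mp hnb
              rw [Finset.mem_sdiff, Finset.mem_singleton] at hj1
              refine ⟨j, Finset.mem_insert_of_mem hj1.1, ?_⟩
              intro hjTk
              rcases Finset.mem_insert.mp hjTk with h' | h'
              · exact hj1.2 h'
              · apply hj2
                rw [Finset.mem_sdiff, Finset.mem_singleton]
                refine ⟨h', fun e => ?_⟩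
                exact hI m (e ▸ hj1.1)
            · refine ⟨m, Finset.mem_insert_self _ _, ?_⟩
              intro hmTk
              rcases Finset.mem_insert.mp hmTk with h' | h'
              · exact hmk h'
              · exact hmIk h'
          obtain ⟨j, hjm, hjk⟩ := this
          simp only [RsetOf, Rset, Finset.mem_biUnion, Finset.mem_filter,
            Finset.mem_univ, true_and]
          exact ⟨j, hjk, hjm⟩
    · intro s t hst
      simp [Finset.disjoint_singleton, hst, hst.symm]
    · ext x
      simp
  exact ⟨main, ⟨_, main⟩⟩
end

section
/- Necessity of securable singletons for secure partitions: if there exists a secure partition of the user set Fin K, then for every user k the singleton {k} is a secure independent set. -/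
open Finset

variable {K : ℕ}

/-- Necessity of securable singletons for secure partitions. -/
theorem securePartition_singletons_secure (K : ℕ) (hK : 1 ≤ K)
    (I : Fin K → Finset (Fin K)) (hI : ∀ k, k ∉ I k)
    (h : ∃ (T : ℕ) (P : Fin T → Finset (Fin K)), SecurePartition I P) :
    ∀ k : Fin K, SecureIndepSet I ({k} : Finset (Fin K)) := by
  intro k
  obtain ⟨T, P, hsec, hdisj, hcov⟩ := h
  -- k belongs to some part
  have hkU : ∃ t, k ∈ P t := by
    have : k ∈ Finset.univ.biUnion P := by rw [hcov]; exact mem_univ k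
    simpa using this
  obtain ⟨t, hk⟩ := hkU
  obtain ⟨hind, C, hCU, hURC, hcover⟩ := hsec t
  set U := P t with hU
  refine ⟨?_, C ∪ (U \ {k}), ?_, ?_, ?_⟩
  · intro i hi j hj hij
    simp only [mem_singleton] at hi hj
    exact absurd (hi.trans hj.symm) hij
  · -- (C ∪ (U \ {k})) ∩ {k} = ∅
    ext x
    simp only [mem_inter, mem_union, mem_sdiff, mem_singleton, notMem_empty,
      iff_false, not_and]
    rintro (hxC | ⟨hxU, hxk⟩) rfl
    · exact absurd (mem_inter.mpr ⟨hxC, hk⟩) (by simp [hCU])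
    · exact hxk rfl
  · -- {k} ∩ R_(C ∪ (U\{k})) = ∅
    ext x
    simp only [mem_inter, mem_singleton, notMem_empty, iff_false, not_and]
    rintro rfl hx
    simp only [RsetOf, mem_biUnion, mem_union, mem_sdiff, mem_singleton] at hx
    obtain ⟨j, hj, hjR⟩ := hx
    rcases hj with hjC | ⟨hjU, hjk⟩
    · have : x ∈ U ∩ RsetOf I C := by
        refine mem_inter.mpr ⟨hk, ?_⟩
        exact mem_biUnion.mpr ⟨j, hjC, hjR⟩
      simp [hURC] at this
    · -- j ∈ U, j ≠ k, x = k ∈ R j means j ∈ T k, contradicting independence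
      simp only [Rset, mem_filter] at hjR
      exact hind x hk j hjU (fun h => hjk h.symm) hjR.2
  · -- R_{k} \ {k} ⊆ R_(C ∪ (U\{k}))
    intro m hm
    simp only [mem_sdiff, mem_singleton, RsetOf, mem_biUnion, mem_singleton] at hm
    obtain ⟨⟨j, hj, hjR⟩, hmk⟩ := hm
    rw [hj] at hjR
    by_cases hmU : m ∈ U
    · -- m ∈ U, m ∈ R k means k ∈ T m, contradiction with independence
      simp only [Rset, mem_filter] at hjR
      exact absurd hjR.2 (hind m hmU k hk hmk)
    · have hmRU : m ∈ RsetOf I U \ U := by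
        refine mem_sdiff.mpr ⟨mem_biUnion.mpr ⟨k, hk, hjR⟩, hmU⟩
      have := hcover hmRU
      simp only [RsetOf, mem_biUnion] at this ⊢
      obtain ⟨j, hjC, hjR'⟩ := this
      exact ⟨j, mem_union_left _ hjC, hjR'⟩
end

section
/- Existence criterion for secure partitions: a secure partition of the user set Fin K exists if and only if the blocking-pair condition fails (equivalently, if and only if every singleton {k} is a secure independent set). -/
open Finset

variable {K : ℕ}

lemma aux_block {K : ℕ} (I : Fin K → Finset (Fin K)) (hI : ∀ k, k ∉ I k)
    {U : Finset (Fin K)} (hU : SecureIndepSet I U) {i j : Fin K}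
    (hij : i ≠ j) (hiIj : i ∈ I j) (hjIi : j ∈ I i) (hjU : j ∈ U)
    (hsub : I i \ {j} ⊆ I j \ {i}) : False := by
  obtain ⟨hind, C, hCU, hUR, hRsub⟩ := hU
  have hiU : i ∉ U := fun h =>
    hind i h j hjU hij (Finset.mem_insert_of_mem hjIi)
  have hiRU : i ∈ RsetOf I U := by
    refine Finset.mem_biUnion.2 ⟨j, hjU, ?_⟩
    simp [Rset, Tset, hjIi]
  obtain ⟨c, hcC, hic⟩ := Finset.mem_biUnion.1 (hRsub (Finset.mem_sdiff.2 ⟨hiRU, hiU⟩))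
  have hcTi : c ∈ Tset I i := by
    simpa [Rset] using hic
  have hjRC : j ∉ RsetOf I C := fun h => by
    have : j ∈ U ∩ RsetOf I C := Finset.mem_inter.2 ⟨hjU, h⟩
    rw [hUR] at this
    exact absurd this (Finset.notMem_empty j)
  have hcTj : c ∉ Tset I j := fun h =>
    hjRC (Finset.mem_biUnion.2 ⟨c, hcC, by simp [Rset, h]⟩)
  have hci : c ≠ i := fun h => hcTj (h ▸ Finset.mem_insert_of_mem hiIj)
  have hcIi : c ∈ I i := by
    rcases Finset.mem_insert.1 hcTi with h | h
    · exact absurd h hci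
    · exact h
  have hcj : c ≠ j := fun h => hcTj (h ▸ Finset.mem_insert_self j (I j))
  have : c ∈ I j \ {i} := hsub (Finset.mem_sdiff.2 ⟨hcIi, by simp [hcj]⟩)
  exact hcTj (Finset.mem_insert_of_mem (Finset.mem_sdiff.1 this).1)

lemma singleton_secure {K : ℕ} (I : Fin K → Finset (Fin K)) (hI : ∀ k, k ∉ I k)
    (hB : ¬ BlockingPair I) (k : Fin K) :
    SecureIndepSet I ({k} : Finset (Fin K)) := by
  constructor
  · intro a ha b hb hab
    simp only [Finset.mem_singleton] at ha hb
    exact absurd (ha.trans hb.symm) hab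
  · refine ⟨Finset.univ.filter (fun j => j ∉ Tset I k), ?_, ?_, ?_⟩
    · rw [Finset.eq_empty_iff_forall_notMem]
      intro x hx
      simp only [Finset.mem_inter, Finset.mem_filter, Finset.mem_singleton] at hx
      exact hx.1.2 (hx.2 ▸ Finset.mem_insert_self k (I k))
    · rw [Finset.eq_empty_iff_forall_notMem]
      intro x hx
      simp only [Finset.mem_inter, Finset.mem_singleton, RsetOf, Finset.mem_biUnion,
        Finset.mem_filter, Rset, Finset.mem_univ, true_and] at hx
      obtain ⟨rfl, c, hc, hck⟩ := hx
      exact hc hck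
    · intro m hm
      rw [Finset.mem_sdiff] at hm
      obtain ⟨hmR, hmU⟩ := hm
      have hmk : m ≠ k := by simpa using hmU
      obtain ⟨c, hc, hmRc⟩ := Finset.mem_biUnion.1 hmR
      rw [Finset.mem_singleton] at hc
      rw [hc] at hmRc
      have hkTm : k ∈ Tset I m := by simpa [Rset] using hmRc
      have hkIm : k ∈ I m := by
        rcases Finset.mem_insert.1 hkTm with h | h
        · exact absurd h.symm hmk
        · exact h
      refine Finset.mem_biUnion.2 ?_
      by_cases hmTk : m ∈ Tset I k
      · -- m ∈ I k (since m ≠ k), mutual pair: find jammer from ¬Blocking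
        have hmIk : m ∈ I k := by
          rcases Finset.mem_insert.1 hmTk with h | h
          · exact absurd h hmk
          · exact h
        have hns : ¬ (I m \ {k} ⊆ I k \ {m}) := fun hs =>
          hB ⟨m, k, hmk, hmIk, hkIm, Or.inr hs⟩
        obtain ⟨c, hcIm, hcks⟩ := Finset.not_subset.1 hns
        simp only [Finset.mem_sdiff, Finset.mem_singleton, not_and, not_not] at hcIm hcks
        have hcIm' : c ∈ I m := hcIm.1
        have hck : c ≠ k := hcIm.2
        have hcTk : c ∉ Tset I k := by
          intro hcTk
          rcases Finset.mem_insert.1 hcTk with h | h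
          · exact hck h
          · exact hI m ((hcks h) ▸ hcIm')
        exact ⟨c, Finset.mem_filter.2 ⟨Finset.mem_univ _, hcTk⟩,
          by simp [Rset, Tset, hcIm']⟩
      · exact ⟨m, Finset.mem_filter.2 ⟨Finset.mem_univ _, hmTk⟩,
          by simp [Rset, Tset]⟩

/-- Existence criterion for secure partitions: a secure partition exists iff the
blocking-pair condition fails, equivalently iff every singleton is a secure
independent set. -/
theorem securePartition_exists_iff (K : ℕ) (hK : 1 ≤ K)
    (I : Fin K → Finset (Fin K)) (hI : ∀ k, k ∉ I k) :
    ((∃ (T : ℕ) (P : Fin T → Finset (Fin K)), SecurePartition I P) ↔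
        ¬ BlockingPair I) ∧
    ((∃ (T : ℕ) (P : Fin T → Finset (Fin K)), SecurePartition I P) ↔
        ∀ k : Fin K, SecureIndepSet I ({k} : Finset (Fin K))) := by
  have h2 : (∀ k : Fin K, SecureIndepSet I ({k} : Finset (Fin K))) →
      ∃ (T : ℕ) (P : Fin T → Finset (Fin K)), SecurePartition I P := by
    intro h
    refine ⟨K, fun t => {t}, fun t => h t, ?_, ?_⟩
    · intro s t hst
      exact Finset.disjoint_singleton.2 hst
    · ext x
      simp
  have h3 : (∃ (T : ℕ) (P : Fin T → Finset (Fin K)), SecurePartition I P) →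
      ¬ BlockingPair I := by
    rintro ⟨T, P, hP, _, hcov⟩ ⟨i, j, hij, hiIj, hjIi, hsub⟩
    rcases hsub with hs | hs
    · -- I j \ {i} ⊆ I i \ {j}: use block containing i, roles swapped
      have : i ∈ Finset.univ.biUnion P := hcov ▸ Finset.mem_univ i
      obtain ⟨t, _, hiP⟩ := Finset.mem_biUnion.1 this
      exact aux_block I hI (hP t) hij.symm hjIi hiIj hiP hs
    · -- I i \ {j} ⊆ I j \ {i}: use block containing j
      have : j ∈ Finset.univ.biUnion P := hcov ▸ Finset.mem_univ j
      obtain ⟨t, _, hjP⟩ := Finset.mem_biUnion.1 this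
      exact aux_block I hI (hP t) hij hiIj hjIi hjP hs
  have h1 := singleton_secure I hI
  exact ⟨⟨h3, fun h => h2 (h1 h)⟩, ⟨fun h => h1 (h3 h), h2⟩⟩
end

section
/- Subset closure of fractional signal generation: if receiver k is a fractional signal generator of a finite set G ⊆ I k, then receiver k is a fractional signal generator of every subset S ⊆ G (an admissible enumeration of S is obtained by taking the enumeration of G restricted to S, in the same order). -/
open Finset

variable {K : ℕ}

/-- Receiver `k` is a fractional signal generator of a finite set `G ⊆ I k` if
there is an enumeration `Π_1, …, Π_n` of the distinct elements of `G`
(`n = |G|`) such that `G \ {Π_1, …, Π_i} ⊆ I (Π_i)` for every `i = 1, …, n`. -/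
def FSG (I : Fin K → Finset (Fin K)) (k : Fin K) (G : Finset (Fin K)) : Prop :=
  G ⊆ I k ∧ ∃ L : List (Fin K), L.Nodup ∧ L.toFinset = G ∧
    ∀ i : Fin L.length, G \ (L.take (i + 1)).toFinset ⊆ I (L.get i)


/-- Subset closure of fractional signal generation: if receiver `k` is a
fractional signal generator of `G ⊆ I k`, then it is a fractional signal
generator of every `S ⊆ G`; an admissible enumeration of `S` is obtained by
restricting an enumeration of `G` to `S`, in the same order. -/
theorem fsg_subset_closed (K : ℕ) (hK : 1 ≤ K)
    (I : Fin K → Finset (Fin K)) (hI : ∀ k, k ∉ I k)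
    (k : Fin K) (G : Finset (Fin K)) (h : FSG I k G)
    (S : Finset (Fin K)) (hS : S ⊆ G) :
    FSG I k S ∧
    ∀ L : List (Fin K), L.Nodup → L.toFinset = G →
      (∀ i : Fin L.length, G \ (L.take (i + 1)).toFinset ⊆ I (L.get i)) →
      ∀ L' : List (Fin K), L' = L.filter (fun x => decide (x ∈ S)) →
        L'.Nodup ∧ L'.toFinset = S ∧
          ∀ i : Fin L'.length, S \ (L'.take (i + 1)).toFinset ⊆ I (L'.get i) := by
  have main : ∀ L : List (Fin K), L.Nodup → L.toFinset = G →
      (∀ i : Fin L.length, G \ (L.take (i + 1)).toFinset ⊆ I (L.get i)) →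
      ∀ L' : List (Fin K), L' = L.filter (fun x => decide (x ∈ S)) →
        L'.Nodup ∧ L'.toFinset = S ∧
          ∀ i : Fin L'.length, S \ (L'.take (i + 1)).toFinset ⊆ I (L'.get i) := by
    intro L hnd hG hcond L' hL'
    subst hL'
    set p : Fin K → Bool := fun x => decide (x ∈ S) with hp
    have hnd' : (L.filter p).Nodup := hnd.filter p
    have hfin : (L.filter p).toFinset = S := by
      ext x
      simp only [List.mem_toFinset, List.mem_filter, hp, decide_eq_true_eq]
      exact ⟨fun ⟨_, hx⟩ => hx,
        fun hx => ⟨by rw [← List.mem_toFinset, hG]; exact hS hx, hx⟩⟩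
    refine ⟨hnd', hfin, ?_⟩
    intro i
    set a := (L.filter p).get i with ha
    have haF : a ∈ L.filter p := by rw [ha]; exact List.get_mem _ i
    have haS : a ∈ S := by
      have := List.of_mem_filter haF
      simpa [hp] using this
    have haL : a ∈ L := List.mem_of_mem_filter haF
    have hj : List.idxOf a L < L.length := List.idxOf_lt_length_iff.mpr haL
    set j := List.idxOf a L with hjdef
    have hgetj : L.get ⟨j, hj⟩ = a := List.idxOf_get hj
    -- a ∉ L.take j
    have hanotake : a ∉ L.take j := by
      intro hmem
      have := List.idxOf_append_of_mem (l₂ := L.drop j) hmem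
      rw [List.take_append_drop] at this
      have hlt := List.idxOf_lt_length_iff.mpr hmem
      rw [← this, List.length_take] at hlt
      omega
    -- L.take (j+1) = L.take j ++ [a]
    have htake : L.take (j + 1) = L.take j ++ [a] := by
      rw [List.take_succ]
      congr 1
      have : L[j]? = some a := by
        rw [List.getElem?_eq_getElem hj]
        simpa [List.get_eq_getElem] using hgetj
      simp [this]
    -- filter of take (j+1)
    have hfiltertake : (L.take (j + 1)).filter p = (L.take j).filter p ++ [a] := by
      rw [htake, List.filter_append]
      congr 1
      simp [hp, haS]
    -- index of a in L.filter p is i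
    have hidx : List.idxOf a (L.filter p) = (i : ℕ) := by
      have hlt : List.idxOf a (L.filter p) < (L.filter p).length :=
        List.idxOf_lt_length_iff.mpr haF
      have : (L.filter p).get ⟨_, hlt⟩ = (L.filter p).get i := by
        rw [List.idxOf_get hlt, ha]
      have := (List.Nodup.get_inj_iff hnd').mp this
      exact congrArg Fin.val this
    -- the filtered prefix is a prefix of L.filter p with length i+1
    have hpre : (L.take (j + 1)).filter p <+: L.filter p :=
      List.IsPrefix.filter p (List.take_prefix _ _)
    have hlen : ((L.take (j + 1)).filter p).length = (i : ℕ) + 1 := by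
      have hanotakef : a ∉ (L.take j).filter p := fun hx =>
        hanotake (List.mem_of_mem_filter hx)
      have h1 : List.idxOf a (L.filter p) =
          ((L.take j).filter p).length := by
        have hdecomp : L.filter p =
            ((L.take j).filter p ++ [a]) ++ (L.drop (j + 1)).filter p := by
          conv_lhs => rw [← List.take_append_drop (j + 1) L]
          rw [List.filter_append, hfiltertake]
        rw [hdecomp, List.idxOf_append_of_mem (by simp),
          List.idxOf_append_of_notMem hanotakef]
        simp
      rw [hfiltertake]
      simp only [List.length_append, List.length_cons, List.length_nil]
      omega
    have hkey : (L.take (j + 1)).filter p = (L.filter p).take ((i : ℕ) + 1) := by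
      rw [List.prefix_iff_eq_take.mp hpre, hlen]
    -- main inclusion
    intro x hx
    simp only [Finset.mem_sdiff, List.mem_toFinset] at hx
    obtain ⟨hxS, hxnot⟩ := hx
    have hxG : x ∈ G := hS hxS
    have hxnotake : x ∉ (L.take (j + 1)).toFinset := by
      simp only [List.mem_toFinset]
      intro hmem
      apply hxnot
      have : x ∈ (L.take (j + 1)).filter p := by
        rw [List.mem_filter]
        exact ⟨hmem, by simp [hp, hxS]⟩
      rw [hkey] at this
      exact this
    have := hcond ⟨j, hj⟩ (by
      simp only [Finset.mem_sdiff]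
      exact ⟨hxG, by simpa using hxnotake⟩)
    rwa [hgetj] at this
  refine ⟨?_, main⟩
  obtain ⟨hGk, L, hnd, hG, hcond⟩ := h
  obtain ⟨h1, h2, h3⟩ := main L hnd hG hcond _ rfl
  exact ⟨hS.trans hGk, _, h1, h2, h3⟩
end
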